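/- Let a = (1 n; 0 1) and b = (1 0; −n 1) in SL₂(ℤ) with n ≥ 2. Then the subgroup of SL₂(ℤ) generated by a and b is free of rank 2. -/

import Mathlib

/-!
Both generators are transvections, and `SL₂(ℤ)` plays ping-pong on `ℤ²` with the sets
`{|y| < |x|}` and `{|x| < |y|}`: for `k ≠ 0` we have `|kn| ≥ 2`, so `Aᵏ (x, y) = (x + kny, y)`
takes a vector with `|x| < |y|` to one with `|y| < |x + kny|`, and symmetrically for `B`.
-/

open Pointwise
theorem FreeGroup.injective_lift_of_ping_pong_zpow {ι : Type*} [Nontrivial ι] {G : Type*}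
    [Group G] (a : ι → G) {α : Type*} [MulAction G α] (X : ι → Set α)
    (hXnonempty : ∀ i, (X i).Nonempty) (hXdisj : Pairwise (Function.onFun Disjoint X))
    (hpp : Pairwise fun i j => ∀ k : ℤ, k ≠ 0 → a i ^ k • X j ⊆ X i) :
    Function.Injective (FreeGroup.lift a) := by
  have hlift : FreeGroup.lift a = (Monoid.CoprodI.lift fun i => FreeGroup.lift fun _ => a i).comp
      (freeGroupEquivCoprodI (ι := ι)).toMonoidHom := by
    ext i
    simp
  rw [hlift, MonoidHom.coe_comp]
  refine Function.Injective.comp ?_ freeGroupEquivCoprodI.injective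
  obtain ⟨i₀, -⟩ := exists_pair_ne ι
  refine Monoid.CoprodI.lift_injective_of_ping_pong _ (Or.inr ⟨i₀, ?_⟩) X hXnonempty hXdisj ?_
  · rw [FreeGroup.freeGroupUnitEquivInt.cardinal_eq, Cardinal.mk_denumerable]
    exact_mod_cast Cardinal.natCast_le_aleph0
  · intro i j hij h hh
    obtain ⟨k, rfl⟩ : ∃ k : ℤ, FreeGroup.of () ^ k = h :=
      ⟨_, FreeGroup.freeGroupUnitEquivInt.left_inv h⟩
    have hk : k ≠ 0 := by rintro rfl; exact hh (zpow_zero _)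
    simpa using hpp hij k hk

lemma abs_lt_abs_add_mul_of_abs_lt {R : Type*} [CommRing R] [LinearOrder R] [IsStrictOrderedRing R]
    {x y c : R} (hc : 2 ≤ |c|) (h : |x| < |y|) : |y| < |x + c * y| := by
  have hcy : 2 * |y| ≤ |c * y| := by
    rw [abs_mul]
    exact mul_le_mul_of_nonneg_right hc (abs_nonneg y)
  have hsub : |c * y| ≤ |x + c * y| + |x| := by
    simpa using abs_sub (x + c * y) x
  linarith

namespace Matrix.SpecialLinearGroup

variable {ι F : Type*} [DecidableEq ι] [Fintype ι] [CommRing F] {i j : ι}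

lemma transvection_zpow (hij : i ≠ j) (b : F) (k : ℤ) :
    transvection hij b ^ k = transvection hij (k * b) := by
  induction k using Int.induction_on with
  | zero => simp
  | succ k ih =>
    rw [_root_.zpow_add_one, ih, ← transvection_add]
    congr 1
    push_cast
    ring
  | pred k ih =>
    rw [_root_.zpow_sub_one, ih, transvection_inv, ← transvection_add]
    congr 1
    push_cast
    ring

lemma transvection_smul_apply_self (hij : i ≠ j) (b : F) (v : ι → F) :
    (transvection hij b • v) i = v i + b * v j := by
  simp [SpecialLinearGroup.smul_def, transvection_coe, add_mulVec, single_mulVec]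

lemma transvection_smul_apply_of_ne (hij : i ≠ j) (b : F) (v : ι → F) {l : ι} (hl : l ≠ i) :
    (transvection hij b • v) l = v l := by
  simp [SpecialLinearGroup.smul_def, transvection_coe, add_mulVec, single_mulVec, hl]

lemma transvection_zpow_smul_subset (hij : i ≠ j) {b : ℤ} (hb : 2 ≤ |b|) {k : ℤ} (hk : k ≠ 0) :
    transvection hij b ^ k • {v : ι → ℤ | |v i| < |v j|} ⊆ {v | |v j| < |v i|} := by
  have hkb : 2 ≤ |k * b| := by
    rw [abs_mul]
    exact hb.trans (le_mul_of_one_le_left (abs_nonneg b) (Int.one_le_abs hk))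
  rw [transvection_zpow, Set.smul_set_subset_iff]
  intro v hv
  rw [Set.mem_ofPred_eq, transvection_smul_apply_self,
    transvection_smul_apply_of_ne hij _ _ hij.symm, Int.cast_id]
  exact abs_lt_abs_add_mul_of_abs_lt hkb hv

end Matrix.SpecialLinearGroup

open Matrix.SpecialLinearGroup

theorem free_group_in_SL2 (n : ℤ) (hn : 2 ≤ n)
    (A B : Matrix.SpecialLinearGroup (Fin 2) ℤ)
    (hA : (A : Matrix (Fin 2) (Fin 2) ℤ) = !![1, n; 0, 1])
    (hB : (B : Matrix (Fin 2) (Fin 2) ℤ) = !![1, 0; -n, 1]) :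
    Function.Injective (FreeGroup.lift (fun x : Bool => if x then A else B) :
      FreeGroup Bool →* Matrix.SpecialLinearGroup (Fin 2) ℤ) := by
  obtain rfl : A = transvection zero_ne_one n := by
    ext a b; fin_cases a <;> fin_cases b <;> simp [hA, transvection_coe]
  obtain rfl : B = transvection one_ne_zero (-n) := by
    ext a b; fin_cases a <;> fin_cases b <;> simp [hB, transvection_coe]
  have hn_abs : 2 ≤ |n| := hn.trans (le_abs_self n)
  refine FreeGroup.injective_lift_of_ping_pong_zpow _
    (fun x => if x then {v : Fin 2 → ℤ | |v 1| < |v 0|} else {v | |v 0| < |v 1|}) ?_ ?_ ?_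
  · rintro (_ | _)
    · exact ⟨![0, 1], by simp⟩
    · exact ⟨![1, 0], by simp⟩
  · rintro (_ | _) (_ | _) hij <;>
      simp only [ne_eq, not_true_eq_false, Function.onFun, Bool.false_eq_true, if_true,
        if_false, Set.disjoint_left, Set.mem_ofPred_eq] at hij ⊢ <;>
      exact fun _ => lt_asymm
  · rintro (_ | _) (_ | _) hij k hk <;> simp only [ne_eq, not_true_eq_false] at hij
    · exact transvection_zpow_smul_subset one_ne_zero (by rwa [abs_neg]) hk
    · exact transvection_zpow_smul_subset zero_ne_one hn_abs hk
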